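/- Linearization of the matrix Riccati equation: let f, g, h, v, y : ℝ → (k×k complex matrices) be differentiable, with y(t)h(t) invertible for all t, and let M : ℝ → (k×k complex matrices) be twice differentiable with M(t) invertible for all t. If M satisfies the linear ODE M̈ = ( ẏ h + y ḣ + y h f ) (y h)⁻¹ Ṁ − y h g v M, then the matrix W(t) := −( y(t) h(t) )⁻¹ Ṁ(t) M(t)⁻¹ satisfies the matrix Riccati equation Ẇ = g v + f W + W y h W. -/

import Mathlib

/-!
With `A = y h`, differentiate `W = -A⁻¹ Ṁ M⁻¹` using `(A⁻¹)˙ = -A⁻¹ Ȧ A⁻¹` and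
`(M⁻¹)˙ = -M⁻¹ Ṁ M⁻¹`, and substitute the linear equation for `M̈`: the two terms containing `Ȧ`
cancel, `A⁻¹ (A f) A⁻¹ Ṁ M⁻¹` gives `f W`, `A⁻¹ (A g v M) M⁻¹` gives `g v`, and the remaining
`A⁻¹ Ṁ M⁻¹ Ṁ M⁻¹` is `W A W`. Nothing here is special to matrices: the computation works in any
complete normed algebra, with `Ring.inverse` as the inverse.
-/

open Matrix

attribute [local instance] Matrix.normedAddCommGroup Matrix.normedSpace

noncomputable section

section NormedAlgebra

variable {𝕜 R : Type*} [NontriviallyNormedField 𝕜] [NormedRing R] [NormedAlgebra 𝕜 R]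
  [HasSummableGeomSeries R]

theorem HasDerivAt.ringInverse {A : 𝕜 → R} {A' : R} {t : 𝕜}
    (hA : HasDerivAt A A' t) (hu : IsUnit (A t)) :
    HasDerivAt (fun s => Ring.inverse (A s))
      (-(Ring.inverse (A t) * A' * Ring.inverse (A t))) t := by
  obtain ⟨u, hu⟩ := hu
  have hinv := hasFDerivAt_ringInverse (𝕜 := 𝕜) u
  rw [hu] at hinv
  rw [← hu, Ring.inverse_unit]
  exact (hinv.comp_hasDerivAt t hA).congr_deriv (by simp)

theorem hasDerivAt_riccati_of_linear {A M M' W : 𝕜 → R} {A' M'' f g v : R} {t : 𝕜}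
    (hA : HasDerivAt A A' t) (hAu : IsUnit (A t))
    (hM : HasDerivAt M (M' t) t) (hMu : IsUnit (M t)) (hM' : HasDerivAt M' M'' t)
    (hODE : M'' = (A' + A t * f) * Ring.inverse (A t) * M' t - A t * g * v * M t)
    (hW : ∀ s, W s = -(Ring.inverse (A s) * (M' s * Ring.inverse (M s)))) :
    HasDerivAt W (g * v + f * W t + W t * A t * W t) t := by
  obtain rfl : W = _ := funext hW
  refine ((hA.ringInverse hAu).fun_mul (hM'.fun_mul (hM.ringInverse hMu))).fun_neg.congr_deriv ?_
  have hinv_mul_A : ∀ x, Ring.inverse (A t) * (A t * x) = x := fun x => by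
    rw [← mul_assoc, Ring.inverse_mul_cancel _ hAu, one_mul]
  have hA_mul_inv : ∀ x, A t * (Ring.inverse (A t) * x) = x := fun x => by
    rw [← mul_assoc, Ring.mul_inverse_cancel _ hAu, one_mul]
  have hM_mul_inv : M t * Ring.inverse (M t) = 1 := Ring.mul_inverse_cancel _ hMu
  rw [hODE]
  simp only [mul_add, add_mul, sub_mul, mul_sub, neg_mul, mul_neg, neg_neg, neg_add,
    neg_sub, mul_assoc, hinv_mul_A, hA_mul_inv, hM_mul_inv, mul_one]
  abel

end NormedAlgebra

theorem matrix_riccati_linearization (k : ℕ)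
    (f g h v y : ℝ → Matrix (Fin k) (Fin k) ℂ)
    (hh : Differentiable ℝ h)
    (hy : Differentiable ℝ y)
    (hyh : ∀ t, IsUnit (y t * h t))
    (M M' M'' : ℝ → Matrix (Fin k) (Fin k) ℂ)
    (hMinv : ∀ t, IsUnit (M t))
    (hM : ∀ t, HasDerivAt M (M' t) t)
    (hM' : ∀ t, HasDerivAt M' (M'' t) t)
    (hODE : ∀ t, M'' t =
      (deriv y t * h t + y t * deriv h t + y t * h t * f t) * (y t * h t)⁻¹ * M' t
        - y t * h t * g t * v t * M t)
    (W : ℝ → Matrix (Fin k) (Fin k) ℂ)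
    (hW : ∀ t, W t = -((y t * h t)⁻¹ * (M' t * (M t)⁻¹))) :
    ∀ t, HasDerivAt W (g t * v t + f t * W t + W t * (y t * h t) * W t) t := by
  intro t
  -- The ∞-operator norm makes matrices a complete normed algebra, and it induces the sup-norm
  -- topology definitionally, so derivatives computed in either structure are the same.
  let opNormedRing := Matrix.linftyOpNormedRing (n := Fin k) (α := ℂ)
  let _ := Matrix.linftyOpNormedAlgebra (R := ℝ) (n := Fin k) (α := ℂ)
  have : @CompleteSpace _ opNormedRing.toUniformSpace := FiniteDimensional.complete ℝ _
  simp only [Matrix.nonsing_inv_eq_ringInverse] at hODE hW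
  have hA : HasDerivAt (fun s => y s * h s) (deriv y t * h t + y t * deriv h t) t :=
    (hy t).hasDerivAt.fun_mul (hh t).hasDerivAt
  -- Elaborating against the goal first makes unification across the two instance structures
  -- time out; `(· :)` fixes all metavariables before that comparison.
  exact (hasDerivAt_riccati_of_linear hA (hyh t) (hM t) (hMinv t) (hM' t) (hODE t) hW :)
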